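/- arXiv:2404.10592 — 4 statements merged into one kernel-verified Lean document; each statement's English description precedes it below -/
import Mathlib

section
/- Let G be a finite group acting by K-algebra automorphisms on a K-algebra S with invariant subring R = S^G, and suppose |G| is invertible in K. Then for every R-algebra A, the natural map A → (A ⊗_R S)^G, a ↦ a ⊗ 1, is an isomorphism of R-algebras, where G acts on A ⊗_R S via its action on the second factor. -/
/-! The Reynolds operator `τ` is an `S^G`-linear retraction of the inclusion `S^G → S`, so
`1 ⊗ τ` is a left inverse of `a ↦ a ⊗ 1` on `A ⊗ S`. Since `τ` is the average of the action,
`1 ⊗ τ` fixes every `G`-invariant tensor; since `τ` takes values in `S^G`, its image lies in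
`A ⊗ 1`. -/

open scoped TensorProduct

/-- The invariant subalgebra `S^G` of an action of a group `G` on a `K`-algebra `S`
by `K`-algebra automorphisms. -/
def invarSub {K S : Type*} [CommSemiring K] [CommSemiring S] [Algebra K S]
    {G : Type*} [Group G] (act : G →* (S ≃ₐ[K] S)) : Subalgebra K S where
  carrier := {s : S | ∀ g : G, act g s = s}
  mul_mem' := fun {a b} ha hb g => by rw [map_mul, ha g, hb g]
  add_mem' := fun {a b} ha hb g => by rw [map_add, ha g, hb g]
  algebraMap_mem' := fun r g => (act g).commutes r

def actLin {K S : Type*} [CommSemiring K] [CommSemiring S] [Algebra K S]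
    {G : Type*} [Group G] (act : G →* (S ≃ₐ[K] S)) (g : G) :
    S →ₗ[↥(invarSub act)] S where
  toFun := act g
  map_add' := map_add _
  map_smul' := fun r s => by
    simp only [RingHom.id_apply, Algebra.smul_def, map_mul]
    congr 1
    exact r.2 g

open TensorProduct

section Retraction

variable {R S M : Type*} [CommSemiring R] [Semiring S] [Algebra R S]
  [AddCommMonoid M] [Module R M]

theorem lTensor_algebraLinearMap_apply (y : M ⊗[R] R) :
    (Algebra.linearMap R S).lTensor M y = TensorProduct.rid R M y ⊗ₜ[R] (1 : S) := by
  induction y using TensorProduct.induction_on with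
  | zero => simp
  | tmul m r => simp [Algebra.algebraMap_eq_smul_one, smul_tmul]
  | add y z hy hz => rw [map_add, hy, hz, map_add, add_tmul]

theorem injective_tmul_one_of_retraction (ρ : S →ₗ[R] R) (hρ : ρ 1 = 1) :
    Function.Injective (fun m : M => m ⊗ₜ[R] (1 : S)) :=
  Function.LeftInverse.injective (g := TensorProduct.rid R M ∘ₗ ρ.lTensor M) fun m => by
    simp [hρ]

theorem mem_range_tmul_one_of_lTensor_eq_self (ρ : S →ₗ[R] R) {x : M ⊗[R] S}
    (hx : (Algebra.linearMap R S ∘ₗ ρ).lTensor M x = x) :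
    x ∈ Set.range (fun m : M => m ⊗ₜ[R] (1 : S)) :=
  ⟨_, by rw [← hx, LinearMap.lTensor_comp_apply, lTensor_algebraLinearMap_apply]⟩

end Retraction

section Reynolds

variable {K S : Type*} [Field K] [CommSemiring S] [Algebra K S]
  {G : Type*} [Group G] [Fintype G] (act : G →* (S ≃ₐ[K] S))

theorem sum_act_mem_invarSub (s : S) : ∑ g : G, act g s ∈ invarSub act := fun h => by
  rw [map_sum]
  exact Fintype.sum_equiv (Equiv.mulLeft h) _ _ fun g => by simp

def reynolds : S →ₗ[invarSub act] invarSub act where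
  toFun s := (Fintype.card G : K)⁻¹ • ⟨_, sum_act_mem_invarSub act s⟩
  map_add' x y := by ext; simp [Finset.sum_add_distrib]
  map_smul' r s := by
    ext
    have hg (g : G) : act g (r • s) = r • act g s := (actLin act g).map_smul r s
    simp only [Subalgebra.coe_smul, RingHom.id_apply, smul_eq_mul, Subalgebra.coe_mul, hg,
      ← Finset.smul_sum]
    rw [smul_comm, Subalgebra.smul_def, smul_eq_mul]

theorem coe_reynolds (s : S) :
    (reynolds act s : S) = (Fintype.card G : K)⁻¹ • ∑ g : G, act g s := rfl

theorem reynolds_one (hcard : (Fintype.card G : K) ≠ 0) : reynolds act 1 = 1 := by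
  ext
  rw [coe_reynolds]
  simp only [map_one, Finset.sum_const, Finset.card_univ, ← Nat.cast_smul_eq_nsmul K, smul_smul,
    inv_mul_cancel₀ hcard, one_smul, OneMemClass.coe_one]

theorem algebraLinearMap_comp_reynolds :
    Algebra.linearMap (invarSub act) S ∘ₗ reynolds act =
      algebraMap K (invarSub act) (Fintype.card G : K)⁻¹ • ∑ g : G, actLin act g := by
  ext s
  simp [coe_reynolds, Algebra.smul_def, Finset.mul_sum, actLin]

theorem lTensor_reynolds_apply_of_forall_eq (hcard : (Fintype.card G : K) ≠ 0)
    {A : Type*} [AddCommMonoid A] [Module (invarSub act) A] {x : A ⊗[invarSub act] S}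
    (hx : ∀ g : G, (actLin act g).lTensor A x = x) :
    (Algebra.linearMap (invarSub act) S ∘ₗ reynolds act).lTensor A x = x := by
  have hcard_inv : algebraMap K (invarSub act) (Fintype.card G : K)⁻¹ * Fintype.card G = 1 := by
    rw [← map_natCast (algebraMap K (invarSub act)), ← map_mul, inv_mul_cancel₀ hcard, map_one]
  rw [algebraLinearMap_comp_reynolds, LinearMap.lTensor_smul, ← LinearMap.coe_lTensorHom,
    map_sum]
  simp only [LinearMap.coe_lTensorHom, LinearMap.smul_apply, LinearMap.sum_apply, hx,
    Finset.sum_const, Finset.card_univ, ← Nat.cast_smul_eq_nsmul (invarSub act), smul_smul,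
    hcard_inv, one_smul]

end Reynolds

/-- In the nonmodular case, taking invariants commutes with base change along `R → A` for
the invariant ring `R = S^G`: the natural map `A → (A ⊗_R S)^G`, `a ↦ a ⊗ 1`, is an
isomorphism of `R`-algebras (here: it is injective with image exactly the invariants of
`A ⊗_R S`, where `G` acts on the second tensor factor). -/
theorem stmt0 {K S : Type*} [Field K] [CommRing S] [Algebra K S]
    {G : Type*} [Group G] [Fintype G]
    (act : G →* (S ≃ₐ[K] S)) (hcard : (Fintype.card G : K) ≠ 0)
    (A : Type*) [CommRing A] [Algebra (↥(invarSub act)) A] :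
    Function.Injective (fun a : A => a ⊗ₜ[↥(invarSub act)] (1 : S)) ∧
    Set.range (fun a : A => a ⊗ₜ[↥(invarSub act)] (1 : S)) =
      {x : A ⊗[↥(invarSub act)] S |
        ∀ g : G, TensorProduct.map LinearMap.id (actLin act g) x = x} := by
  refine ⟨injective_tmul_one_of_retraction _ (reynolds_one act hcard), ?_⟩
  ext x
  constructor
  · rintro ⟨a, rfl⟩ g
    simp [actLin]
  · intro hx
    exact mem_range_tmul_one_of_lTensor_eq_self _
      (lTensor_reynolds_apply_of_forall_eq act hcard hx)
end

section
/- Let −1 ≠ 1 in K and let the nontrivial element of G = ℤ/2ℤ act on K[X,Y,W] by negating all three variables. Then the invariant ring K[X,Y,W]^G equals K[X², Y², W², XY, XW, YW] (the second Veronese subring of K[X,Y,W]). -/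
open MvPolynomial

set_option maxHeartbeats 1000000

namespace Stmt4Aux

variable {K : Type*} [Field K]

lemma monomial_pair (i j : Fin 3) :
    monomial (Finsupp.single i 1 + Finsupp.single j 1) (1 : K) = X i * X j := by
  rw [show (X i : MvPolynomial (Fin 3) K) = monomial (Finsupp.single i 1) 1 from rfl,
      show (X j : MvPolynomial (Fin 3) K) = monomial (Finsupp.single j 1) 1 from rfl,
      monomial_mul, one_mul]

lemma phi_monomial (d : Fin 3 →₀ ℕ) (a : K) :
    aeval (fun i : Fin 3 => -X i) (monomial d a) =
      monomial d ((-1) ^ (d 0 + d 1 + d 2) * a) := by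
  rw [aeval_monomial]
  have h1 : (d.prod fun i k => (-X i : MvPolynomial (Fin 3) K) ^ k) =
      ∏ i : Fin 3, (-X i : MvPolynomial (Fin 3) K) ^ d i :=
    Finsupp.prod_fintype _ _ (fun i => pow_zero _)
  rw [h1]
  have h2 : ∀ i : Fin 3, (-X i : MvPolynomial (Fin 3) K) ^ d i
      = (-1) ^ d i * X i ^ d i := by intro i; rw [neg_pow]
  simp_rw [h2]
  rw [Finset.prod_mul_distrib, Finset.prod_pow_eq_pow_sum]
  have h3 : (∏ i : Fin 3, (X i : MvPolynomial (Fin 3) K) ^ d i) = monomial d 1 := by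
    rw [monomial_eq, map_one, one_mul]
    exact (Finsupp.prod_fintype _ _ (fun i => pow_zero _)).symm
  rw [h3, Fin.sum_univ_three]
  have h4 : ((-1 : MvPolynomial (Fin 3) K)) ^ (d 0 + d 1 + d 2)
      = C ((-1 : K) ^ (d 0 + d 1 + d 2)) := by
    rw [C_pow]
    norm_num
  rw [h4, algebraMap_eq, ← mul_assoc, ← C_mul, C_mul_monomial, mul_one, mul_comm a]

lemma coeff_phi (f : MvPolynomial (Fin 3) K) (d : Fin 3 →₀ ℕ) :
    coeff d (aeval (fun i : Fin 3 => -X i) f) = (-1) ^ (d 0 + d 1 + d 2) * coeff d f := by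
  conv_lhs => rw [f.as_sum]
  rw [map_sum, coeff_sum]
  simp_rw [phi_monomial, coeff_monomial]
  rw [Finset.sum_ite_eq' f.support d (fun e => (-1) ^ (e 0 + e 1 + e 2) * coeff e f)]
  by_cases h : d ∈ f.support
  · rw [if_pos h]
  · rw [if_neg h, notMem_support_iff.mp h, mul_zero]

lemma mem_adjoin_of_even (S : Set (MvPolynomial (Fin 3) K))
    (hS : S = {(X 0 ^ 2 : MvPolynomial (Fin 3) K), X 1 ^ 2, X 2 ^ 2,
          X 0 * X 1, X 0 * X 2, X 1 * X 2})
    (n : ℕ) (hn : Even n) (d : Fin 3 →₀ ℕ) (hd : d 0 + d 1 + d 2 = n) (a : K) :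
    monomial d a ∈ Algebra.adjoin K S := by
  induction n using Nat.strong_induction_on generalizing d with
  | _ n ih =>
    rcases Nat.eq_zero_or_pos n with h0 | hpos
    · subst h0
      have hd0 : d = 0 := by
        ext i
        fin_cases i <;> simp <;> omega
      rw [hd0, monomial_zero', ← algebraMap_eq]
      exact Subalgebra.algebraMap_mem _ a
    · -- find e ≤ d with e a quadratic monomial
      have key : ∃ e : Fin 3 →₀ ℕ, e ≤ d ∧ e 0 + e 1 + e 2 = 2 ∧
          (monomial e (1 : K)) ∈ S := by
        by_cases h00 : 2 ≤ d 0
        · exact ⟨Finsupp.single 0 2, by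
            rw [Finsupp.le_iff]; intro i _; fin_cases i <;> simp [Finsupp.single_apply] <;> omega,
            by simp [Finsupp.single_apply], by rw [← X_pow_eq_monomial]; subst hS; simp⟩
        by_cases h11 : 2 ≤ d 1
        · exact ⟨Finsupp.single 1 2, by
            rw [Finsupp.le_iff]; intro i _; fin_cases i <;> simp [Finsupp.single_apply] <;> omega,
            by simp [Finsupp.single_apply], by rw [← X_pow_eq_monomial]; subst hS; simp⟩
        by_cases h22 : 2 ≤ d 2
        · exact ⟨Finsupp.single 2 2, by
            rw [Finsupp.le_iff]; intro i _; fin_cases i <;> simp [Finsupp.single_apply] <;> omega,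
            by simp [Finsupp.single_apply], by rw [← X_pow_eq_monomial]; subst hS; simp⟩
        -- now all d i ≤ 1, sum even positive, so exactly two are 1
        have hsum : 2 ≤ n := by
          obtain ⟨k, hk⟩ := hn; omega
        by_cases h01 : 1 ≤ d 0 ∧ 1 ≤ d 1
        · exact ⟨Finsupp.single 0 1 + Finsupp.single 1 1, by
            rw [Finsupp.le_iff]; intro i _;
            fin_cases i <;> simp [Finsupp.single_apply] <;> omega,
            by simp [Finsupp.single_apply],
            by rw [monomial_pair]; subst hS; simp⟩
        by_cases h02 : 1 ≤ d 0 ∧ 1 ≤ d 2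
        · exact ⟨Finsupp.single 0 1 + Finsupp.single 2 1, by
            rw [Finsupp.le_iff]; intro i _;
            fin_cases i <;> simp [Finsupp.single_apply] <;> omega,
            by simp [Finsupp.single_apply],
            by rw [monomial_pair]; subst hS; simp⟩
        have h12 : 1 ≤ d 1 ∧ 1 ≤ d 2 := by omega
        exact ⟨Finsupp.single 1 1 + Finsupp.single 2 1, by
            rw [Finsupp.le_iff]; intro i _;
            fin_cases i <;> simp [Finsupp.single_apply] <;> omega,
            by simp [Finsupp.single_apply],
            by rw [monomial_pair]; subst hS; simp⟩
      obtain ⟨e, hle, he2, heS⟩ := key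
      have hdd : d = e + (d - e) := (add_tsub_cancel_of_le hle).symm
      have hsub : ∀ i, (d - e) i = d i - e i := fun i => Finsupp.tsub_apply d e i
      have hmul : monomial d a = monomial e (1 : K) * monomial (d - e) a := by
        rw [monomial_mul, one_mul, ← hdd]
      rw [hmul]
      have hle' : ∀ i, e i ≤ d i := Finsupp.le_def.mp hle
      have hn2 : 2 ≤ n := by obtain ⟨k, hk⟩ := hn; omega
      refine mul_mem (Algebra.subset_adjoin heS) (ih (n - 2) (by omega) (by
        obtain ⟨k, hk⟩ := hn; exact ⟨k - 1, by omega⟩) (d - e) ?_)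
      have h0 := hle' 0; have h1 := hle' 1; have h2' := hle' 2
      rw [hsub 0, hsub 1, hsub 2]; omega

end Stmt4Aux

/-- For the action of `ℤ/2ℤ` on `K[X,Y,W]` (char `K ≠ 2`) where the nontrivial element
negates all three variables, the invariant ring is
`K[X², Y², W², XY, XW, YW]`, the second Veronese subalgebra. Here `X = X 0`, `Y = X 1`,
`W = X 2` in `MvPolynomial (Fin 3) K`. -/
theorem stmt4 {K : Type*} [Field K] (h2 : (-1 : K) ≠ 1) :
    {f : MvPolynomial (Fin 3) K | aeval (fun i : Fin 3 => -X i) f = f} =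
      ↑(Algebra.adjoin K
        {(X 0 ^ 2 : MvPolynomial (Fin 3) K), X 1 ^ 2, X 2 ^ 2,
          X 0 * X 1, X 0 * X 2, X 1 * X 2}) := by
  have h2' : (2 : K) ≠ 0 := by
    intro h
    apply h2
    linear_combination -h
  apply Set.Subset.antisymm
  · intro f hf
    rw [SetLike.mem_coe, f.as_sum]
    apply sum_mem
    intro d hd
    rcases Nat.even_or_odd (d 0 + d 1 + d 2) with he | ho
    · exact Stmt4Aux.mem_adjoin_of_even _ rfl _ he d rfl _
    · exfalso
      apply MvPolynomial.mem_support_iff.mp hd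
      have hh := congrArg (coeff d) hf
      rw [Stmt4Aux.coeff_phi, Odd.neg_one_pow ho, neg_one_mul] at hh
      have : 2 * coeff d f = 0 := by linear_combination -hh
      rcases mul_eq_zero.mp this with h | h
      · exact absurd h h2'
      · exact h
  · have key : Algebra.adjoin K
        ({(X 0 ^ 2 : MvPolynomial (Fin 3) K), X 1 ^ 2, X 2 ^ 2,
          X 0 * X 1, X 0 * X 2, X 1 * X 2} : Set (MvPolynomial (Fin 3) K)) ≤
        AlgHom.equalizer (aeval fun i : Fin 3 => -X i) (AlgHom.id K _) := by
      apply Algebra.adjoin_le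
      rintro p hp
      simp only [Set.mem_insert_iff, Set.mem_singleton_iff] at hp
      rcases hp with rfl | rfl | rfl | rfl | rfl | rfl <;>
        simp [AlgHom.mem_equalizer, neg_mul_neg, neg_sq]
    intro f hf
    have := key hf
    rw [AlgHom.mem_equalizer] at this
    simpa using this
end

section
/- Let G be a finite group acting by K-algebra automorphisms on a local Artinian K-algebra S with residue field K (so the maximal ideal is preserved), and let ρ: G → GL_m(K) be a linear representation inducing an action on S[W₁,…,W_m]. Then the natural surjection (S[W₁,…,W_m])^G → K[W₁,…,W_m]^{ρ(G)}, induced by the projection S → S/𝔪 = K, has nilpotent kernel; i.e., the reduction of the invariant algebra (S[W₁,…,W_m])^G is K[W₁,…,W_m]^{ρ(G)}. -/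
open MvPolynomial

/-- Let `S` be a local Artinian `K`-algebra with residue field `K`, with a finite group `G`
acting on `S` by `K`-algebra automorphisms and on the variables `W₁,…,W_m` via a linear
representation `ρ` (given by invertible matrices).  Then the natural surjection
`(S[W₁,…,W_m])^G → K[W₁,…,W_m]^{ρ(G)}` induced by the residue map `S → K` is well defined,
surjective, and has nilpotent kernel; i.e. the reduction of the invariant algebra
`(S[W])^G` is `K[W]^{ρ(G)}`. -/
theorem stmt12 {K S : Type*} [Field K] [CommRing S] [Algebra K S]
    [IsLocalRing S] [IsArtinianRing S]
    (hres : Function.Bijective (algebraMap K (IsLocalRing.ResidueField S)))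
    {G : Type*} [Group G] [Fintype G] {m : ℕ}
    (actS : G →* (S ≃ₐ[K] S)) (ρ : G →* (Matrix (Fin m) (Fin m) K)ˣ) :
    let Tact : G → MvPolynomial (Fin m) S → MvPolynomial (Fin m) S := fun g f =>
      aeval (fun i => ∑ j, C (algebraMap K S (((ρ g : Matrix (Fin m) (Fin m) K)) i j)) * X j)
        (MvPolynomial.map ((actS g).toRingEquiv : S ≃+* S).toRingHom f)
    let KAct : G → MvPolynomial (Fin m) K → MvPolynomial (Fin m) K := fun g p =>
      aeval (fun i => ∑ j, C ((ρ g : Matrix (Fin m) (Fin m) K) i j) * X j) p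
    let r : S →+* K :=
      ((RingEquiv.ofBijective (algebraMap K (IsLocalRing.ResidueField S)) hres).symm :
          IsLocalRing.ResidueField S ≃+* K).toRingHom.comp (IsLocalRing.residue S)
    (∀ f : MvPolynomial (Fin m) S, (∀ g, Tact g f = f) →
        ∀ g, KAct g (MvPolynomial.map r f) = MvPolynomial.map r f) ∧
    (∀ p : MvPolynomial (Fin m) K, (∀ g, KAct g p = p) →
        ∃ f : MvPolynomial (Fin m) S, (∀ g, Tact g f = f) ∧ MvPolynomial.map r f = p) ∧
    (∀ f : MvPolynomial (Fin m) S, (∀ g, Tact g f = f) →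
        MvPolynomial.map r f = 0 → IsNilpotent f) := by
  intro Tact KAct r
  -- basic facts about `r`
  have hralg : ∀ k : K, r (algebraMap K S k) = k := by
    intro k
    show (RingEquiv.ofBijective (algebraMap K (IsLocalRing.ResidueField S)) hres).symm
        (IsLocalRing.residue S (algebraMap K S k)) = k
    have h1 : IsLocalRing.residue S (algebraMap K S k)
        = algebraMap K (IsLocalRing.ResidueField S) k := rfl
    rw [h1]
    exact (RingEquiv.ofBijective (algebraMap K (IsLocalRing.ResidueField S)) hres).symm_apply_apply k
  have hker : ∀ s : S, r s = 0 ↔ s ∈ IsLocalRing.maximalIdeal S := by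
    intro s
    have h1 : r s = 0 ↔ IsLocalRing.residue S s = 0 := by
      show (RingEquiv.ofBijective (algebraMap K (IsLocalRing.ResidueField S)) hres).symm
        (IsLocalRing.residue S s) = 0 ↔ _
      exact EmbeddingLike.map_eq_zero_iff
    rw [h1]
    exact IsLocalRing.residue_eq_zero_iff s
  -- `r` is invariant under the `G`-action on `S`
  have hrsig : ∀ (g : G) (s : S), r (actS g s) = r s := by
    intro g s
    have hmem : s - algebraMap K S (r s) ∈ IsLocalRing.maximalIdeal S := by
      rw [← hker]; simp [hralg]
    have heq : actS g (s - algebraMap K S (r s)) = actS g s - algebraMap K S (r s) := by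
      rw [map_sub, AlgEquiv.commutes]
    have hmem2 : actS g s - algebraMap K S (r s) ∈ IsLocalRing.maximalIdeal S := by
      rw [IsLocalRing.mem_maximalIdeal, mem_nonunits_iff] at hmem ⊢
      intro hu
      apply hmem
      rw [← heq] at hu
      have := hu.map (actS g).symm.toAlgHom
      simpa using this
    have h0 : r (actS g s - algebraMap K S (r s)) = 0 := (hker _).mpr hmem2
    rw [map_sub, hralg, sub_eq_zero] at h0
    exact h0
  refine ⟨?_, ?_, ?_⟩
  · -- part 1
    intro f hf g
    have key : (MvPolynomial.map r).comp
        (((aeval (fun i => ∑ j, C (algebraMap K S ((ρ g : Matrix (Fin m) (Fin m) K) i j)) * X j)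
            : MvPolynomial (Fin m) S →ₐ[S] MvPolynomial (Fin m) S)).toRingHom.comp
          (MvPolynomial.map ((actS g).toRingEquiv : S ≃+* S).toRingHom))
        = ((aeval (fun i => ∑ j, C ((ρ g : Matrix (Fin m) (Fin m) K) i j) * X j)
            : MvPolynomial (Fin m) K →ₐ[K] MvPolynomial (Fin m) K)).toRingHom.comp
          (MvPolynomial.map r) := by
      apply MvPolynomial.ringHom_ext
      · intro s
        simp [hrsig g s, algebraMap_eq]
      · intro i
        simp [hralg]
    have hk := RingHom.congr_fun key f
    simp only [RingHom.comp_apply, AlgHom.toRingHom_eq_coe, RingHom.coe_coe] at hk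
    show aeval _ (MvPolynomial.map r f) = _
    rw [← hk]
    show MvPolynomial.map r (Tact g f) = _
    rw [hf g]
  · -- part 2
    intro p hp
    refine ⟨MvPolynomial.map (algebraMap K S) p, ?_, ?_⟩
    · intro g
      have key : ((aeval (fun i => ∑ j, C (algebraMap K S ((ρ g : Matrix (Fin m) (Fin m) K) i j)) * X j)
            : MvPolynomial (Fin m) S →ₐ[S] MvPolynomial (Fin m) S)).toRingHom.comp
          ((MvPolynomial.map ((actS g).toRingEquiv : S ≃+* S).toRingHom).comp
            (MvPolynomial.map (algebraMap K S)))
          = (MvPolynomial.map (algebraMap K S)).comp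
            ((aeval (fun i => ∑ j, C ((ρ g : Matrix (Fin m) (Fin m) K) i j) * X j)
              : MvPolynomial (Fin m) K →ₐ[K] MvPolynomial (Fin m) K)).toRingHom := by
        apply MvPolynomial.ringHom_ext
        · intro k
          simp [algebraMap_eq]
        · intro i
          simp
      have hk := RingHom.congr_fun key p
      simp only [RingHom.comp_apply, AlgHom.toRingHom_eq_coe, RingHom.coe_coe] at hk
      show aeval _ (MvPolynomial.map _ (MvPolynomial.map (algebraMap K S) p)) = _
      rw [hk]; exact congrArg _ (hp g)
    · rw [MvPolynomial.map_map]
      have hid : r.comp (algebraMap K S) = RingHom.id K := by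
        ext k; exact hralg k
      rw [hid, MvPolynomial.map_id]
  · -- part 3
    intro f _ hmap
    have hcoeff : ∀ d, coeff d f ∈ IsLocalRing.maximalIdeal S := by
      intro d
      rw [← hker]
      have := congrArg (coeff d) hmap
      simpa [MvPolynomial.coeff_map] using this
    obtain ⟨n, hn⟩ : IsNilpotent (IsLocalRing.maximalIdeal S) := by
      rw [← IsLocalRing.jacobson_eq_maximalIdeal (⊥ : Ideal S) bot_ne_top]
      exact IsArtinianRing.isNilpotent_jacobson_bot
    have hfI : f ∈ Ideal.map (C : S →+* MvPolynomial (Fin m) S) (IsLocalRing.maximalIdeal S) := by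
      rw [MvPolynomial.as_sum f]
      apply Ideal.sum_mem
      intro d _
      rw [show (monomial d) (coeff d f) = C (coeff d f) * monomial d 1 by
        simp [MvPolynomial.C_mul_monomial]]
      exact Ideal.mul_mem_right _ _ (Ideal.mem_map_of_mem _ (hcoeff d))
    refine ⟨n, ?_⟩
    have hp : f ^ n ∈ (Ideal.map (C : S →+* MvPolynomial (Fin m) S) (IsLocalRing.maximalIdeal S)) ^ n :=
      Ideal.pow_mem_pow hfI n
    rw [← Ideal.map_pow, hn] at hp
    simpa using hp
end

section
/- Let K be a field with a primitive 2nd root of unity (char K ≠ 2), and let ℤ/2ℤ act on K[X,Y] by negating both variables and on W by negation, yielding the invariant ring R = K[X²,Y²,XY] ≅ K[A,B,C]/(AB − C²) and invariant algebra T = K[X²,Y²,XY,W²,XW,YW]. Then in the base change K[X,Y] ⊗_R T, the element YE − XF (where E = XW, F = YW) is a nonzero nilpotent: it is nonzero but its square is zero. -/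
open MvPolynomial TrivSqZeroExt

set_option synthInstance.maxHeartbeats 2000000
set_option maxHeartbeats 2000000

/-- For `ℤ/2ℤ` acting on `K[X,Y,W]` by negation of all variables (char `K ≠ 2`), the base
change `K[X,Y] ⊗_R T` of the invariant algebra `T = K[X²,Y²,XY,W²,XW,YW]` along
`R = K[X²,Y²,XY] → K[X,Y]` has the presentation
`K[X,Y][D,E,F]/(E² − X²D, F² − Y²D, EF − DXY, XYE − X²F, XYF − Y²E)`, and in it the element
`YE − XF` is a nonzero nilpotent: it is nonzero but its square is zero.
Variables: `X = X 0, Y = X 1, D = X 2, E = X 3, F = X 4`. -/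
theorem stmt18 {K : Type*} [Field K] (h2 : (-1 : K) ≠ 1) :
    let I : Ideal (MvPolynomial (Fin 5) K) := Ideal.span
      {X 3 ^ 2 - X 0 ^ 2 * X 2, X 4 ^ 2 - X 1 ^ 2 * X 2,
        X 3 * X 4 - X 2 * X 0 * X 1,
        X 0 * X 1 * X 3 - X 0 ^ 2 * X 4, X 0 * X 1 * X 4 - X 1 ^ 2 * X 3}
    Ideal.Quotient.mk I (X 1 * X 3 - X 0 * X 4) ≠ 0 ∧
    (Ideal.Quotient.mk I (X 1 * X 3 - X 0 * X 4)) ^ 2 = 0 := by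
  intro I
  constructor
  · -- nonzero: map to `DualNumber (DualNumber K)` sending
    -- `X ↦ 0, Y ↦ ε, D ↦ 0, E ↦ inl ε', F ↦ 0`; all generators die but `YE - XF ↦ inr ε' ≠ 0`.
    let u : DualNumber (DualNumber K) := DualNumber.eps
    let v : DualNumber (DualNumber K) := inl DualNumber.eps
    let φ : MvPolynomial (Fin 5) K →+* DualNumber (DualNumber K) :=
      eval₂Hom (algebraMap K (DualNumber (DualNumber K))) ![0, u, 0, v, 0]
    have hX0 : φ (X 0) = 0 := eval₂Hom_X' _ _ 0
    have hX1 : φ (X 1) = u := eval₂Hom_X' _ _ 1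
    have hX2 : φ (X 2) = 0 := eval₂Hom_X' _ _ 2
    have hX3 : φ (X 3) = v := eval₂Hom_X' _ _ 3
    have hX4 : φ (X 4) = 0 := eval₂Hom_X' _ _ 4
    have hu2 : u * u = 0 := DualNumber.eps_mul_eps
    have hv2 : v * v = 0 := by
      show inl _ * inl _ = (0 : DualNumber (DualNumber K))
      rw [inl_mul_inl, DualNumber.eps_mul_eps, inl_zero]
    have huv : u * v = inr (DualNumber.eps : DualNumber K) := by
      show inr 1 * inl _ = _
      rw [inr_mul_inl]
      congr 1
      show (1 : DualNumber K) * DualNumber.eps = DualNumber.eps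
      rw [one_mul]
    have hker : I ≤ RingHom.ker φ := by
      rw [Ideal.span_le]
      intro g hg
      simp only [Set.mem_insert_iff, Set.mem_singleton_iff] at hg
      rcases hg with rfl | rfl | rfl | rfl | rfl <;>
        · rw [SetLike.mem_coe, RingHom.mem_ker]
          simp only [map_sub, map_mul, map_pow, hX0, hX1, hX2, hX3, hX4, pow_two]
          first
            | rw [hv2]; ring
            | rw [hu2]; ring
            | ring
    intro h
    rw [Ideal.Quotient.eq_zero_iff_mem] at h
    have h0 : φ (X 1 * X 3 - X 0 * X 4) = 0 := hker h
    rw [map_sub, map_mul, map_mul, hX0, hX1, hX3, hX4, huv, zero_mul, sub_zero] at h0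
    have heps : (DualNumber.eps : DualNumber K) = 0 :=
      inr_injective (M := DualNumber K) (R := DualNumber K) (by rw [h0, inr_zero])
    exact one_ne_zero (inr_injective (M := K) (R := K) (by
      rw [show ((DualNumber.eps : DualNumber K)) = inr 1 from rfl] at heps
      rw [heps, inr_zero]))
  · -- the square is an explicit combination of the generators
    have hsq : (X 1 * X 3 - X 0 * X 4 : MvPolynomial (Fin 5) K) ^ 2
      = X 1 ^ 2 * (X 3 ^ 2 - X 0 ^ 2 * X 2) + X 0 ^ 2 * (X 4 ^ 2 - X 1 ^ 2 * X 2)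
        - 2 * (X 0 * X 1) * (X 3 * X 4 - X 2 * X 0 * X 1) := by ring
    rw [← map_pow, Ideal.Quotient.eq_zero_iff_mem, hsq]
    refine sub_mem (add_mem ?_ ?_) ?_ <;>
      refine Ideal.mul_mem_left _ _ (Ideal.subset_span ?_)
    · exact Set.mem_insert _ _
    · exact Set.mem_insert_of_mem _ (Set.mem_insert _ _)
    · exact Set.mem_insert_of_mem _ (Set.mem_insert_of_mem _ (Set.mem_insert _ _))
end
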